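/- Let f : ℝ → ℝ be three times differentiable on (0,∞) with f'(u) ≠ 0 and f''(u) ≠ 0 for all u > 0, and set B(u) = (1/(2f''(u)))·((f'(u) + u f''(u))/(u f'(u)) − f'''(u)/f''(u)). There do not exist real numbers λ ≠ 0 and μ ≠ 0 such that B(u) − 1/f'(u) = λ u and B(u) f'(u) + 1 = μ f(u) hold for all u > 0. -/

import Mathlib

/-- The auxiliary function
`B(u) = (1/(2f''(u)))·((f'(u) + u f''(u))/(u f'(u)) − f'''(u)/f''(u))`. -/
noncomputable def Bfun (f : ℝ → ℝ) (u : ℝ) : ℝ :=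
  (1 / (2 * deriv (deriv f) u)) *
    ((deriv f u + u * deriv (deriv f) u) / (u * deriv f u) -
      deriv (deriv (deriv f)) u / deriv (deriv f) u)

/-!
Eliminating `B` between the two equations gives the Euler-type relation `μ f = λ u f' + 2`.
Differentiating it twice expresses `f''` and `f'''` through `f'` and `f''`, which collapses the
definition of `B` to `B = 1/(u f'')`. Fed back into the first equation this forces
`(μ - λ) μ f = μ` on `(0, ∞)`; since `f' ≠ 0`, `f` is not constant, so `(μ - λ) μ = 0` and
then `μ = 0`.
-/

open Set

theorem sub_mul_deriv_eq_of_mul_eq_mul_deriv_add {g : ℝ → ℝ} {s : Set ℝ} {a c d : ℝ}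
    (hs : IsOpen s) (hg : ∀ u ∈ s, DifferentiableAt ℝ g u)
    (hg' : ∀ u ∈ s, DifferentiableAt ℝ (deriv g) u)
    (h : ∀ u ∈ s, c * g u = a * u * deriv g u + d) :
    ∀ u ∈ s, (c - a) * deriv g u = a * u * deriv (deriv g) u := by
  intro u hu
  have hderiv := (show EqOn (fun u => c * g u) (fun u => a * u * deriv g u + d) s from h).deriv
    hs hu
  have hlhs : HasDerivAt (fun u => c * g u) (c * deriv g u) u :=
    (hg u hu).hasDerivAt.const_mul c
  have hrhs : HasDerivAt (fun u => a * u * deriv g u + d)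
      (a * 1 * deriv g u + a * u * deriv (deriv g) u) u :=
    (((hasDerivAt_id u).const_mul a).mul (hg' u hu).hasDerivAt).add_const d
  rw [hlhs.deriv, hrhs.deriv] at hderiv
  linear_combination hderiv

theorem Bfun_eq_one_div {f : ℝ → ℝ} {u lam mu : ℝ} (hu : u ≠ 0) (hlam : lam ≠ 0)
    (h1 : deriv f u ≠ 0) (h2 : deriv (deriv f) u ≠ 0)
    (hE1 : (mu - lam) * deriv f u = lam * u * deriv (deriv f) u)
    (hE2 : (mu - lam - lam) * deriv (deriv f) u = lam * u * deriv (deriv (deriv f)) u) :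
    Bfun f u = 1 / (u * deriv (deriv f) u) := by
  rw [Bfun]
  field_simp
  apply mul_left_cancel₀ hlam
  linear_combination -deriv (deriv f) u * hE1 + deriv f u * hE2

/-- For `f` three times differentiable on `(0,∞)` with `f' ≠ 0`, `f'' ≠ 0`, there do not
exist nonzero reals `λ, μ` with `B(u) − 1/f'(u) = λu` and `B(u) f'(u) + 1 = μ f(u)` on
`(0,∞)` (Case 4 of the classification by the second-fundamental-form Laplacian). -/
theorem lapII_eigen_case4_impossible
    (f : ℝ → ℝ)
    (hf : ∀ u ∈ Set.Ioi (0 : ℝ), DifferentiableAt ℝ f u)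
    (hf' : ∀ u ∈ Set.Ioi (0 : ℝ), DifferentiableAt ℝ (deriv f) u)
    (hf'' : ∀ u ∈ Set.Ioi (0 : ℝ), DifferentiableAt ℝ (deriv (deriv f)) u)
    (h1 : ∀ u ∈ Set.Ioi (0 : ℝ), deriv f u ≠ 0)
    (h2 : ∀ u ∈ Set.Ioi (0 : ℝ), deriv (deriv f) u ≠ 0) :
    ¬ ∃ lam mu : ℝ, lam ≠ 0 ∧ mu ≠ 0 ∧
      (∀ u ∈ Set.Ioi (0 : ℝ), Bfun f u - 1 / deriv f u = lam * u) ∧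
      (∀ u ∈ Set.Ioi (0 : ℝ), Bfun f u * deriv f u + 1 = mu * f u) := by
  rintro ⟨lam, mu, hlam, hmu, hB₁, hB₂⟩
  have hB : ∀ u ∈ Ioi (0 : ℝ), Bfun f u = lam * u + 1 / deriv f u := fun u hu => by
    linarith [hB₁ u hu]
  have hA : ∀ u ∈ Ioi (0 : ℝ), mu * f u = lam * u * deriv f u + 2 := by
    intro u hu
    rw [← hB₂ u hu, hB u hu]
    field_simp [h1 u hu]
    ring
  have hE1 := sub_mul_deriv_eq_of_mul_eq_mul_deriv_add isOpen_Ioi hf hf' hA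
  have hE2 := sub_mul_deriv_eq_of_mul_eq_mul_deriv_add isOpen_Ioi hf' hf'' fun u hu =>
    (hE1 u hu).trans (add_zero _).symm
  have hconst : EqOn (fun u => (mu - lam) * mu * f u) (fun _ => mu) (Ioi 0) := by
    intro u hu
    have hu0 : u ≠ 0 := (mem_Ioi.1 hu).ne'
    have hBu := Bfun_eq_one_div hu0 hlam (h1 u hu) (h2 u hu) (hE1 u hu) (hE2 u hu)
    rw [hB u hu] at hBu
    field_simp [hu0, h1 u hu, h2 u hu] at hBu
    have hkey : (mu - lam) * (lam * u * deriv f u + 1) = lam := by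
      refine mul_right_cancel₀ (mul_ne_zero hu0 (h2 u hu)) ?_
      linear_combination (mu - lam) * hBu + hE1 u hu
    dsimp only
    linear_combination (mu - lam) * hA u hu + hkey
  have h1pos : (1 : ℝ) ∈ Ioi 0 := mem_Ioi.2 one_pos
  have hderiv := hconst.deriv isOpen_Ioi h1pos
  rw [deriv_const_mul _ (hf 1 h1pos), deriv_const] at hderiv
  have hzero : (mu - lam) * mu = 0 := (mul_eq_zero.1 hderiv).resolve_right (h1 1 h1pos)
  exact hmu (by simpa [hzero] using (hconst h1pos).symm)
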